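/- For every density operator ρ on ℂ^d, every positive integer n, every δ > 0 and every η > 0: if B is an η-shadow of ρ^{⊗n} (i.e. 0 ≤ B ≤ 1 and Tr(ρ^{⊗n} B) ≥ η), then Tr B ≥ (η − d/δ²)·exp₂(nH(ρ) − K·d·δ·√n), where K = 2 log₂(e)/e and H(ρ) = −Tr(ρ log₂ ρ). -/

import Mathlib

open Matrix BigOperators Finset
open scoped Classical ComplexOrder

noncomputable section

/-- Square complex matrices of size `d` (operators on `ℂ^d`). -/
abbrev Mat (d : ℕ) := Matrix (Fin d) (Fin d) ℂ

/-- Operators on the `n`-fold tensor power `(ℂ^d)^{⊗n}`, indexed by `Fin n → Fin d`. -/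
abbrev MatPow (d n : ℕ) := Matrix (Fin n → Fin d) (Fin n → Fin d) ℂ

/-- Tensor product `A 0 ⊗ A 1 ⊗ ⋯ ⊗ A (n-1)` of a family of `d × d` matrices. -/
def tensorPow {d n : ℕ} (A : Fin n → Mat d) : MatPow d n :=
  Matrix.of fun j k => ∏ i, A i (j i) (k i)

/-- Exponential to base 2. -/
def exp2 (t : ℝ) : ℝ := (2 : ℝ) ^ t

/-- `P` is a probability distribution on the finite set `X`. -/
def IsProbDist {X : Type*} [Fintype X] (P : X → ℝ) : Prop :=
  (∀ x, 0 ≤ P x) ∧ ∑ x, P x = 1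

/-- `ρ` is a density operator (a state): positive semidefinite with trace one. -/
def IsState {ι : Type*} [Fintype ι] [DecidableEq ι] (ρ : Matrix ι ι ℂ) : Prop :=
  ρ.PosSemidef ∧ ρ.trace = 1

/-- `N(x|x^n)`: number of occurrences of the letter `x` in the sequence `xs`. -/
def countIn {X : Type*} {n : ℕ} (x : X) (xs : Fin n → X) : ℕ :=
  (Finset.univ.filter fun i => xs i = x).card

/-- The variance-typical set `T^n_{P,δ}`. -/
def typicalSet {X : Type*} [Fintype X] (n : ℕ) (P : X → ℝ) (δ : ℝ) :
    Finset (Fin n → X) :=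
  Finset.univ.filter fun xs => ∀ x : X,
    |(countIn x xs : ℝ) - n * P x| ≤ δ * Real.sqrt n * Real.sqrt (P x * (1 - P x))

/-- Product (i.i.d.) probability `P^{⊗n}(A)` of a set `A` of sequences. -/
def prodProb {X : Type*} [Fintype X] {n : ℕ} (P : X → ℝ) (A : Finset (Fin n → X)) : ℝ :=
  ∑ xs ∈ A, ∏ i, P (xs i)

/-- Shannon entropy to base 2. -/
def shannonEntropy {X : Type*} [Fintype X] (P : X → ℝ) : ℝ :=
  -∑ x, P x * Real.logb 2 (P x)

/-- von Neumann entropy to base 2, `H(ρ) = -Tr(ρ log₂ ρ)`, via the eigenvalues. -/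
def vnEntropy {d : ℕ} (ρ : Mat d) : ℝ :=
  if h : ρ.IsHermitian then -∑ i, h.eigenvalues i * Real.logb 2 (h.eigenvalues i) else 0

/-- The constant `K = 2 log₂(e) / e`. -/
def Kconst : ℝ := 2 * Real.logb 2 (Real.exp 1) / Real.exp 1

/-- A diagonalization `ρ = Σ_j R j • π j` into one-dimensional mutually orthogonal
eigenprojectors, with eigenvalue list `R` a probability distribution. -/
def IsDiagonalization {d : ℕ} (ρ : Mat d) (R : Fin d → ℝ) (π : Fin d → Mat d) : Prop :=
  (∀ j, (π j).PosSemidef) ∧ (∀ j, π j * π j = π j) ∧ (∀ j, (π j).trace = 1) ∧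
    (∀ j k, j ≠ k → π j * π k = 0) ∧ (∑ j, π j = 1) ∧
    ρ = ∑ j, (R j : ℂ) • π j ∧ IsProbDist R

/-- The variance-typical projector `Π^n_{ρ,δ}` of a state with fixed diagonalization
`(R, π)`. -/
def typicalProj {d : ℕ} (n : ℕ) (R : Fin d → ℝ) (π : Fin d → Mat d) (δ : ℝ) : MatPow d n :=
  ∑ js ∈ typicalSet n R δ, tensorPow fun i => π (js i)

/-- `B` is an `η`-shadow of the state `σ`: `0 ≤ B ≤ 1` and `Tr(σB) ≥ η`. -/
def IsShadow {ι : Type*} [Fintype ι] [DecidableEq ι] (σ B : Matrix ι ι ℂ) (η : ℝ) : Prop :=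
  B.PosSemidef ∧ ((1 : Matrix ι ι ℂ) - B).PosSemidef ∧ η ≤ (Matrix.trace (σ * B)).re

/-- Average state `PW = Σ_x P(x) W_x` of a cq-channel under input distribution `P`. -/
def avgState {X : Type*} [Fintype X] {d : ℕ} (P : X → ℝ) (W : X → Mat d) : Mat d :=
  ∑ x, (P x : ℂ) • W x

/-- Conditional von Neumann entropy `H(W|P) = Σ_x P(x) H(W_x)`. -/
def condEntropy {X : Type*} [Fintype X] {d : ℕ} (P : X → ℝ) (W : X → Mat d) : ℝ :=
  ∑ x, P x * vnEntropy (W x)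

/-- Mutual information `I(P;W) = H(PW) − H(W|P)`. -/
def mutualInfo {X : Type*} [Fintype X] {d : ℕ} (P : X → ℝ) (W : X → Mat d) : ℝ :=
  vnEntropy (avgState P W) - condEntropy P W

/-- Capacity `C(W) = max_P I(P;W)`. -/
def capacity {X : Type*} [Fintype X] {d : ℕ} (W : X → Mat d) : ℝ :=
  sSup {c | ∃ P : X → ℝ, IsProbDist P ∧ c = mutualInfo P W}

/-- `(f, D)` (with message set `M` inside the outcome index set `M'`) is an
`(n,λ)`-code for the cq-channel `W`: the `D m` are positive semidefinite, sum to the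
identity, and each message is decoded correctly with probability at least `1 - λ`. -/
def IsCode {X : Type*} [Fintype X] {d n : ℕ} (W : X → Mat d) (lam : ℝ)
    {M' : Type*} [Fintype M'] (M : Finset M') (f : M' → Fin n → X)
    (D : M' → MatPow d n) : Prop :=
  (∀ m, (D m).PosSemidef) ∧ (∑ m, D m = 1) ∧
    ∀ m ∈ M, 1 - lam ≤ (Matrix.trace (tensorPow (fun i => W (f m i)) * D m)).re

/-- `N(n,λ)`: maximal size of an `(n,λ)`-code for `W`. -/
def maxCodeSize {X : Type*} [Fintype X] (d : ℕ) (W : X → Mat d) (n : ℕ) (lam : ℝ) : ℕ :=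
  sSup {k | ∃ (M' : Type) (_ : Fintype M') (M : Finset M') (f : M' → Fin n → X)
    (D : M' → MatPow d n), IsCode W lam M f D ∧ M.card = k}

/-- Trace norm `‖A‖₁ = Tr|A|`: the sum of the singular values. -/
def traceNorm {ι : Type*} [Fintype ι] [DecidableEq ι] (A : Matrix ι ι ℂ) : ℝ :=
  ∑ i, Real.sqrt ((Matrix.posSemidef_conjTranspose_mul_self A).1.eigenvalues i)

/-- Trace distance `D(ρ,σ) = ½‖ρ−σ‖₁`. -/
def traceDist {ι : Type*} [Fintype ι] [DecidableEq ι] (ρ σ : Matrix ι ι ℂ) : ℝ :=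
  traceNorm (ρ - σ) / 2

/-- (Pure-state) fidelity `F(ρ,σ) = Tr(ρσ)`. -/
def fidelity {ι : Type*} [Fintype ι] [DecidableEq ι] (ρ σ : Matrix ι ι ℂ) : ℝ :=
  (Matrix.trace (ρ * σ)).re

/-- A pure state: the rank-one orthogonal projector `|ψ⟩⟨ψ|` onto the span of a
unit vector `ψ`. -/
def IsPureState {ι : Type*} [Fintype ι] (ρ : Matrix ι ι ℂ) : Prop :=
  ∃ ψ : ι → ℂ, (∑ i, star (ψ i) * ψ i) = 1 ∧ ρ = Matrix.vecMulVec ψ (star ψ)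

/-- The set of eigenvalue-index sequences `js` that are variance-typical, with
constant `δ`, for the distribution `q x` on each block `I_x = {i : xs i = x}`. -/
def condTypicalSet {X : Type*} [Fintype X] {n d : ℕ} (xs : Fin n → X)
    (q : X → Fin d → ℝ) (δ : ℝ) : Finset (Fin n → Fin d) :=
  Finset.univ.filter fun js => ∀ (x : X) (k : Fin d),
    |((Finset.univ.filter fun i => xs i = x ∧ js i = k).card : ℝ) - (countIn x xs : ℝ) * q x k|
      ≤ δ * Real.sqrt (countIn x xs) * Real.sqrt (q x k * (1 - q x k))

/-- Conditional variance-typical projector `Π^n_{W,δ}(x^n) = ⊗_{x∈X} Π^{I_x}_{W_x,δ}`,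
with respect to fixed diagonalizations `W_x = Σ_j (q x j) • (π x j)`. -/
def condTypicalProj {X : Type*} [Fintype X] {d : ℕ} {n : ℕ} (xs : Fin n → X)
    (q : X → Fin d → ℝ) (π : X → Fin d → Mat d) (δ : ℝ) : MatPow d n :=
  ∑ js ∈ condTypicalSet xs q δ, tensorPow fun i => π (xs i) (js i)

/-!
In the product eigenbasis of `ρ^{⊗n}` the statement becomes classical. The diagonal entries `p`
of `B` lie in `[0,1]`, sum to `Tr B`, and have expectation at least `η` under `P^n`, where `P` is
the spectrum of `ρ`. By Chebyshev's inequality the variance-typical set has `P^n`-mass at least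
`1 - d/δ²`, and each typical sequence has probability at most `exp₂(-nH(ρ) + Kdδ√n)`, because
`√p · log₂(1/p) ≤ K` for every `p ∈ [0,1]`. Hence `η ≤ d/δ² + exp₂(-nH(ρ) + Kdδ√n) · Tr B`.
-/

/-- Chebyshev's inequality for finitely supported weights; `Σ w D²` plays the variance. -/
lemma sum_filter_lt_abs_le {ι : Type*} [Fintype ι] {w : ι → ℝ} (hw : ∀ i, 0 ≤ w i)
    (D : ι → ℝ) {δ : ℝ} (hδ : 0 < δ) :
    ∑ i with δ * √(∑ j, w j * D j ^ 2) < |D i|, w i ≤ 1 / δ ^ 2 := by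
  set V := ∑ j, w j * D j ^ 2 with hVdef
  have hterm : ∀ j, 0 ≤ w j * D j ^ 2 := fun j => mul_nonneg (hw j) (sq_nonneg _)
  rcases (sum_nonneg fun j _ => hterm j : 0 ≤ V).eq_or_lt with hV | hV
  · -- zero variance: the weight vanishes wherever `D ≠ 0`
    have hzero : ∀ j, w j * D j ^ 2 = 0 :=
      fun j => (sum_eq_zero_iff_of_nonneg fun j _ => hterm j).mp hV.symm j (mem_univ j)
    refine le_of_eq_of_le (sum_eq_zero fun i hi => ?_) (by positivity)
    have hD : D i ≠ 0 := by
      have hi := (mem_filter.mp hi).2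
      rw [hVdef, ← hV, Real.sqrt_zero, mul_zero] at hi
      exact abs_pos.mp hi
    simpa [hD] using hzero i
  · calc ∑ i with δ * √V < |D i|, w i
        ≤ ∑ i with δ * √V < |D i|, w i * D i ^ 2 / (δ ^ 2 * V) := by
          refine sum_le_sum fun i hi => ?_
          have hi : (δ * √V) ^ 2 < D i ^ 2 := by
            simpa using pow_lt_pow_left₀ (mem_filter.mp hi).2 (by positivity) two_ne_zero
          rw [mul_pow, Real.sq_sqrt hV.le] at hi
          rw [le_div_iff₀ (by positivity)]
          exact mul_le_mul_of_nonneg_left hi.le (hw i)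
      _ ≤ ∑ i, w i * D i ^ 2 / (δ ^ 2 * V) :=
          sum_le_sum_of_subset_of_nonneg (filter_subset _ _) fun i _ _ => by
            have := hterm i; positivity
      _ = 1 / δ ^ 2 := by
          rw [← sum_div, div_mul_cancel_right₀ hV.ne', one_div]

lemma sum_biUnion_le_sum_sum {ι κ : Type*} [DecidableEq κ] {w : κ → ℝ} (hw : ∀ k, 0 ≤ w k)
    (s : Finset ι) (t : ι → Finset κ) :
    ∑ k ∈ s.biUnion t, w k ≤ ∑ i ∈ s, ∑ k ∈ t i, w k := by
  rw [← sup_eq_biUnion]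
  refine s.apply_sup_le_sum (f := fun u => ∑ k ∈ u, w k) sum_empty fun {u v} => ?_
  rw [← sum_union_inter]
  exact le_add_of_nonneg_right (sum_nonneg fun k _ => hw k)

lemma sum_mul_le_add_mul_sum {ι : Type*} [Fintype ι] [DecidableEq ι] (T : Finset ι)
    {w p : ι → ℝ} {ε lam : ℝ} (hw : ∀ i, 0 ≤ w i) (hp : ∀ i, p i ∈ Set.Icc 0 1) (hlam : 0 ≤ lam)
    (hTc : ∑ i ∈ Tᶜ, w i ≤ ε) (hT : ∀ i ∈ T, w i ≤ lam) :
    ∑ i, w i * p i ≤ ε + lam * ∑ i, p i := by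
  rw [← sum_add_sum_compl T, add_comm, mul_sum]
  gcongr with i hi i hi
  · calc ∑ i ∈ Tᶜ, w i * p i ≤ ∑ i ∈ Tᶜ, w i :=
          sum_le_sum fun i _ => mul_le_of_le_one_right (hw i) (hp i).2
      _ ≤ ε := hTc
  · exact (sum_le_sum fun i hi => mul_le_mul_of_nonneg_right (hT i hi) (hp i).1).trans
      (sum_le_sum_of_subset_of_nonneg (subset_univ T) fun i _ _ => mul_nonneg hlam (hp i).1)

section ProductWeights

variable {X : Type*} [Fintype X] {n : ℕ}

lemma sum_prod_mul_prod (P : X → ℝ) (g : Fin n → X → ℝ) :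
    ∑ xs : Fin n → X, (∏ k, P (xs k)) * ∏ k, g k (xs k) = ∏ k, ∑ y, P y * g k y := by
  simp_rw [← prod_mul_distrib]
  exact (Fintype.prod_sum fun k y => P y * g k y).symm

lemma sum_prod_mul_mul_apply {P : X → ℝ} (hP : ∑ x, P x = 1) {f : X → ℝ}
    (hf : ∑ x, P x * f x = 0) (i j : Fin n) :
    ∑ xs : Fin n → X, (∏ k, P (xs k)) * (f (xs i) * f (xs j))
      = if i = j then ∑ x, P x * f x ^ 2 else 0 := by
  set g : Fin n → X → ℝ := fun k y => (if k = i then f y else 1) * (if k = j then f y else 1)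
  have hg : ∀ xs : Fin n → X, f (xs i) * f (xs j) = ∏ k, g k (xs k) := by
    intro xs
    rw [prod_mul_distrib, prod_ite_eq' univ i, prod_ite_eq' univ j]
    simp
  simp_rw [hg, sum_prod_mul_prod P g, g]
  split_ifs with hij
  · subst hij
    rw [Fintype.prod_eq_single i fun k hk => by simp [hk, hP]]
    simp [sq]
  · exact prod_eq_zero (mem_univ i) (by simp [hij, hf])

lemma sum_prod_mul_sum_sq {P : X → ℝ} (hP : ∑ x, P x = 1) {f : X → ℝ}
    (hf : ∑ x, P x * f x = 0) :
    ∑ xs : Fin n → X, (∏ k, P (xs k)) * (∑ i, f (xs i)) ^ 2 = n * ∑ x, P x * f x ^ 2 := by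
  simp_rw [sq (∑ i, _), sum_mul_sum, mul_sum]
  rw [sum_comm]
  simp_rw [sum_comm (γ := Fin n → X), sum_prod_mul_mul_apply hP hf, sum_ite_eq, if_pos (mem_univ _)]
  simp [mul_sum]

lemma sum_prod_mul_countIn_sub_sq {P : X → ℝ} (hP : IsProbDist P) (x : X) :
    ∑ xs : Fin n → X, (∏ k, P (xs k)) * ((countIn x xs : ℝ) - n * P x) ^ 2
      = n * (P x * (1 - P x)) := by
  classical
  set f : X → ℝ := fun y => (if y = x then 1 else 0) - P x
  have hcount : ∀ xs : Fin n → X, (countIn x xs : ℝ) - n * P x = ∑ i, f (xs i) := by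
    intro xs
    rw [countIn, card_filter]
    push_cast
    simp [f, sum_sub_distrib]
  simp_rw [hcount]
  rw [sum_prod_mul_sum_sq hP.2]
  · congr 1
    simp [f, sub_sq, mul_add, mul_sub, sum_add_distrib, sum_sub_distrib, ← sum_mul, hP.2]
    ring
  · simp [f, mul_sub, sum_sub_distrib, ← sum_mul, hP.2]

end ProductWeights

lemma prodProb_compl_typicalSet_le {X : Type*} [Fintype X] [DecidableEq X] {n : ℕ} {P : X → ℝ}
    (hP : IsProbDist P) {δ : ℝ} (hδ : 0 < δ) :
    prodProb P (typicalSet n P δ)ᶜ ≤ Fintype.card X / δ ^ 2 := by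
  set w : (Fin n → X) → ℝ := fun xs => ∏ k, P (xs k)
  have hw : ∀ xs, 0 ≤ w xs := fun xs => prod_nonneg fun k _ => hP.1 _
  set D : X → (Fin n → X) → ℝ := fun x xs => (countIn x xs : ℝ) - n * P x
  have hcompl : (typicalSet n P δ)ᶜ
      = univ.biUnion fun x => {xs | δ * √(∑ ys, w ys * D x ys ^ 2) < |D x xs|} := by
    ext xs
    simp [typicalSet, w, D, sum_prod_mul_countIn_sub_sq hP, Real.sqrt_mul (Nat.cast_nonneg n),
      mul_assoc]
  calc prodProb P (typicalSet n P δ)ᶜ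
      ≤ ∑ x, ∑ xs with δ * √(∑ ys, w ys * D x ys ^ 2) < |D x xs|, w xs := by
        rw [prodProb, hcompl]
        exact sum_biUnion_le_sum_sum hw _ _
    _ ≤ ∑ _x : X, 1 / δ ^ 2 := sum_le_sum fun x _ => sum_filter_lt_abs_le hw (D x) hδ
    _ = Fintype.card X / δ ^ 2 := by simp [div_eq_mul_inv]

lemma exp2_pos (t : ℝ) : 0 < exp2 t := Real.rpow_pos_of_pos two_pos t

lemma exp2_le_exp2 {s t : ℝ} (h : s ≤ t) : exp2 s ≤ exp2 t :=
  Real.rpow_le_rpow_of_exponent_le one_le_two h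

lemma exp2_neg_mul_exp2 (t : ℝ) : exp2 (-t) * exp2 t = 1 := by
  rw [exp2, exp2, ← Real.rpow_add two_pos, neg_add_cancel, Real.rpow_zero]

lemma Kconst_eq : Kconst = 2 * Real.exp (-1) / Real.log 2 := by
  rw [Kconst, Real.logb, Real.log_exp, Real.exp_neg]
  field_simp

/-- From `-t log t ≤ 1/e`, applied to `t = √p`. -/
lemma sqrt_mul_neg_logb_le_Kconst {p : ℝ} (hp : 0 ≤ p) : √p * -Real.logb 2 p ≤ Kconst := by
  have hlog2 : 0 < Real.log 2 := Real.log_pos one_lt_two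
  rw [Kconst_eq]
  rcases hp.eq_or_lt with rfl | hp
  · simp only [Real.sqrt_zero, zero_mul]
    positivity
  have hsqrt : √p = Real.exp (-(-Real.log √p)) := by
    rw [neg_neg, Real.exp_log (Real.sqrt_pos.mpr hp)]
  have hlog : -Real.log p = 2 * -Real.log √p := by
    rw [Real.log_sqrt hp.le]
    ring
  have key : √p * -Real.log p ≤ 2 * Real.exp (-1) := by
    calc √p * -Real.log p = 2 * ((-Real.log √p) * Real.exp (-(-Real.log √p))) := by
          rw [← hsqrt, hlog]
          ring
      _ ≤ 2 * Real.exp (-1) := by gcongr; exact Real.mul_exp_neg_le_exp_neg_one _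
  rw [Real.logb, ← neg_div, ← mul_div_assoc]
  exact div_le_div_of_nonneg_right key hlog2.le

lemma mul_logb_le_of_abs_sub_le {p m N s : ℝ} (hp0 : 0 ≤ p) (hp1 : p ≤ 1) (hs : 0 ≤ s)
    (h : |N - m * p| ≤ s * √(p * (1 - p))) :
    N * Real.logb 2 p ≤ m * (p * Real.logb 2 p) + Kconst * s := by
  have hlog : Real.logb 2 p ≤ 0 := Real.logb_nonpos one_lt_two hp0 hp1
  have hN : m * p - s * √(p * (1 - p)) ≤ N := by linarith [(abs_le.mp h).1]
  have hsqrt : √(p * (1 - p)) ≤ √p := Real.sqrt_le_sqrt (by nlinarith)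
  have hK := sqrt_mul_neg_logb_le_Kconst hp0
  calc N * Real.logb 2 p ≤ (m * p - s * √(p * (1 - p))) * Real.logb 2 p :=
        mul_le_mul_of_nonpos_right hN hlog
    _ = m * (p * Real.logb 2 p) + s * (√(p * (1 - p)) * -Real.logb 2 p) := by ring
    _ ≤ m * (p * Real.logb 2 p) + s * (√p * -Real.logb 2 p) := by gcongr; linarith
    _ ≤ m * (p * Real.logb 2 p) + Kconst * s := by linarith [mul_le_mul_of_nonneg_left hK hs]

section TypicalSet

variable {X : Type*} [Fintype X] {n : ℕ}

lemma sum_apply_eq_sum_countIn_mul (xs : Fin n → X) (f : X → ℝ) :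
    ∑ i, f (xs i) = ∑ x, (countIn x xs : ℝ) * f x := by
  rw [← sum_fiberwise' univ xs f]
  simp [countIn]

lemma pos_of_mem_typicalSet {P : X → ℝ} (hP : ∀ x, 0 ≤ P x) {δ : ℝ} {xs : Fin n → X}
    (hxs : xs ∈ typicalSet n P δ) (i : Fin n) : 0 < P (xs i) := by
  refine (hP (xs i)).lt_of_ne fun h0 => ?_
  have hcount : 0 < countIn (xs i) xs := card_pos.mpr ⟨i, by simp⟩
  have := (mem_filter.mp hxs).2 (xs i)
  rw [← h0] at this
  simp only [mul_zero, sub_zero, Nat.abs_cast, mul_one, Real.sqrt_zero, Nat.cast_nonpos] at this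
  omega

lemma prod_le_exp2_of_mem_typicalSet {P : X → ℝ} (hP : IsProbDist P) {δ : ℝ} (hδ : 0 ≤ δ)
    {xs : Fin n → X} (hxs : xs ∈ typicalSet n P δ) :
    ∏ i, P (xs i) ≤ exp2 (-(n * shannonEntropy P - Kconst * Fintype.card X * δ * √n)) := by
  have hP1 : ∀ x, P x ≤ 1 := fun x => hP.2 ▸ single_le_sum (fun y _ => hP.1 y) (mem_univ x)
  calc ∏ i, P (xs i) = exp2 (∑ x, (countIn x xs : ℝ) * Real.logb 2 (P x)) := by
        rw [← sum_apply_eq_sum_countIn_mul, exp2, Real.rpow_sum_of_pos two_pos]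
        exact prod_congr rfl fun i _ =>
          (Real.rpow_logb two_pos one_lt_two.ne' (pos_of_mem_typicalSet hP.1 hxs i)).symm
    _ ≤ exp2 (∑ x, (n * (P x * Real.logb 2 (P x)) + Kconst * (δ * √n))) :=
        exp2_le_exp2 <| sum_le_sum fun x _ => mul_logb_le_of_abs_sub_le (hP.1 x) (hP1 x)
          (by positivity) ((mem_filter.mp hxs).2 x)
    _ = _ := by
        simp only [sum_add_distrib, ← mul_sum, sum_const, card_univ, nsmul_eq_mul,
          shannonEntropy]
        ring_nf

end TypicalSet

section TensorPow

variable {d n : ℕ}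

lemma tensorPow_mul (A B : Fin n → Mat d) :
    tensorPow (fun i => A i * B i) = tensorPow A * tensorPow B := by
  ext a b
  simp only [tensorPow, of_apply, mul_apply, Fintype.prod_sum, prod_mul_distrib]

lemma tensorPow_conjTranspose (A : Fin n → Mat d) :
    (tensorPow A)ᴴ = tensorPow fun i => (A i)ᴴ := by
  ext a b
  simp [tensorPow, star_prod]

lemma tensorPow_diagonal (f : Fin n → Fin d → ℂ) :
    tensorPow (fun i => diagonal (f i)) = diagonal fun js => ∏ i, f i (js i) := by
  ext a b
  simp [tensorPow, diagonal_apply, Fintype.prod_ite_zero, funext_iff]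

lemma tensorPow_one : tensorPow (fun _ : Fin n => (1 : Mat d)) = 1 := by
  simp [← diagonal_one, tensorPow_diagonal]

lemma tensorPow_mem_unitaryGroup {U : Fin n → Mat d} (hU : ∀ i, U i ∈ unitaryGroup (Fin d) ℂ) :
    tensorPow U ∈ unitaryGroup (Fin n → Fin d) ℂ := by
  simp only [mem_unitaryGroup_iff, star_eq_conjTranspose] at hU ⊢
  simp [tensorPow_conjTranspose, ← tensorPow_mul, hU, tensorPow_one]

end TensorPow

lemma re_apply_self_mem_Icc {ι : Type*} [Fintype ι] [DecidableEq ι] {B : Matrix ι ι ℂ}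
    (h0 : B.PosSemidef) (h1 : (1 - B).PosSemidef) (i : ι) : (B i i).re ∈ Set.Icc 0 1 := by
  have hB := (Complex.le_def.mp (h0.diag_nonneg (i := i))).1
  have hB' := (Complex.le_def.mp (h1.diag_nonneg (i := i))).1
  simp only [Matrix.sub_apply, Matrix.one_apply_eq, Complex.sub_re, Complex.one_re,
    Complex.zero_re] at hB hB'
  exact ⟨hB, by linarith⟩

lemma trace_tensorPow_conj_diagonal_mul {d n : ℕ} (U : Fin n → Mat d) (f : Fin n → Fin d → ℂ)
    (B : MatPow d n) :
    trace (tensorPow (fun i => U i * diagonal (f i) * (U i)ᴴ) * B)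
      = ∑ js, (∏ i, f i (js i)) * ((tensorPow U)ᴴ * B * tensorPow U) js js := by
  rw [tensorPow_mul, tensorPow_mul, tensorPow_diagonal, ← tensorPow_conjTranspose, mul_assoc,
    mul_assoc, trace_mul_comm, mul_assoc]
  simp [trace, diagonal_mul]

/-- `p` is the diagonal of `B` in the product eigenbasis of `ρ^{⊗n}`. -/
lemma exists_sum_prod_eigenvalues_mul_of_isShadow {d n : ℕ} {ρ : Mat d} (hρ : ρ.IsHermitian)
    {B : MatPow d n} {η : ℝ} (hB : IsShadow (tensorPow fun _ : Fin n => ρ) B η) :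
    ∃ p : (Fin n → Fin d) → ℝ, (∀ js, p js ∈ Set.Icc 0 1) ∧
      η ≤ ∑ js, (∏ i, hρ.eigenvalues (js i)) * p js ∧ (trace B).re = ∑ js, p js := by
  set U : Mat d := (hρ.eigenvectorUnitary : Mat d)
  set V := tensorPow fun _ : Fin n => U
  have hV : V ∈ unitaryGroup (Fin n → Fin d) ℂ :=
    tensorPow_mem_unitaryGroup fun _ => hρ.eigenvectorUnitary.2
  have hVV : Vᴴ * V = 1 := mem_unitaryGroup_iff'.mp hV
  have hVV' : V * Vᴴ = 1 := mem_unitaryGroup_iff.mp hV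
  have hρU : ρ = U * diagonal (RCLike.ofReal ∘ hρ.eigenvalues) * Uᴴ := by
    conv_lhs => rw [hρ.spectral_theorem, Unitary.conjStarAlgAut_apply]
    rfl
  refine ⟨fun js => ((Vᴴ * B * V) js js).re, fun js => re_apply_self_mem_Icc
    (hB.1.conjTranspose_mul_mul_same V) ?_ js, ?_, ?_⟩
  · rw [show 1 - Vᴴ * B * V = Vᴴ * (1 - B) * V by rw [mul_sub, sub_mul, mul_one, hVV]]
    exact hB.2.1.conjTranspose_mul_mul_same V
  · have h := hB.2.2
    rw [hρU, trace_tensorPow_conj_diagonal_mul, Complex.re_sum] at h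
    simpa [← Complex.ofReal_prod, Complex.re_ofReal_mul] using h
  · rw [← Complex.re_sum]
    change _ = (trace (Vᴴ * B * V)).re
    rw [trace_mul_cycle, hVV', one_mul]

lemma IsState.isProbDist_eigenvalues {d : ℕ} {ρ : Mat d} (hρ : IsState ρ) :
    IsProbDist hρ.1.1.eigenvalues := by
  refine ⟨hρ.1.eigenvalues_nonneg, Complex.ofReal_injective ?_⟩
  rw [Complex.ofReal_sum, Complex.ofReal_one]
  exact hρ.1.1.trace_eq_sum_eigenvalues.symm.trans hρ.2

lemma vnEntropy_eq_shannonEntropy {d : ℕ} {ρ : Mat d} (hρ : ρ.IsHermitian) :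
    vnEntropy ρ = shannonEntropy hρ.eigenvalues := by
  rw [vnEntropy, dif_pos hρ, shannonEntropy]

theorem shadow_bound_tensor_power_general {d : ℕ} (ρ : Mat d) (hρ : IsState ρ)
    (n : ℕ) (δ η : ℝ) (hδ : 0 < δ)
    (B : MatPow d n) (hB : IsShadow (tensorPow fun _ : Fin n => ρ) B η) :
    (η - (d : ℝ) / δ ^ 2) * exp2 ((n : ℝ) * vnEntropy ρ - Kconst * d * δ * Real.sqrt n)
      ≤ (Matrix.trace B).re := by
  set R := hρ.1.1.eigenvalues
  have hR : IsProbDist R := hρ.isProbDist_eigenvalues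
  set s := (n : ℝ) * vnEntropy ρ - Kconst * d * δ * Real.sqrt n
  obtain ⟨p, hp, hηp, htr⟩ := exists_sum_prod_eigenvalues_mul_of_isShadow hρ.1.1 hB
  have hTc : prodProb R (typicalSet n R δ)ᶜ ≤ d / δ ^ 2 := by
    simpa using prodProb_compl_typicalSet_le (n := n) hR hδ
  have hT : ∀ js ∈ typicalSet n R δ, ∏ i, R (js i) ≤ exp2 (-s) := fun js hjs => by
    simpa [s, vnEntropy_eq_shannonEntropy hρ.1.1] using
      prod_le_exp2_of_mem_typicalSet hR hδ.le hjs
  have hmain : η ≤ d / δ ^ 2 + exp2 (-s) * (trace B).re :=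
    htr ▸ hηp.trans (sum_mul_le_add_mul_sum (typicalSet n R δ)
      (fun js => prod_nonneg fun i _ => hR.1 _) hp (exp2_pos _).le hTc hT)
  calc (η - d / δ ^ 2) * exp2 s ≤ exp2 (-s) * (trace B).re * exp2 s := by
        gcongr
        · exact (exp2_pos s).le
        · linarith
    _ = (trace B).re := by rw [mul_right_comm, exp2_neg_mul_exp2, one_mul]

/-- **Lemma 2, part 4 (Shadow bound for `ρ^{⊗n}`).** Every `η`-shadow `B` of `ρ^{⊗n}`
satisfies `Tr B ≥ (η − d/δ²) exp₂(nH(ρ) − Kdδ√n)`, with `K = 2 log₂(e)/e`. -/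
theorem shadow_bound_tensor_power {d : ℕ} (ρ : Mat d) (hρ : IsState ρ)
    (n : ℕ) (hn : 0 < n) (δ η : ℝ) (hδ : 0 < δ) (hη : 0 < η)
    (B : MatPow d n) (hB : IsShadow (tensorPow fun _ : Fin n => ρ) B η) :
    (η - (d : ℝ) / δ ^ 2) * exp2 ((n : ℝ) * vnEntropy ρ - Kconst * d * δ * Real.sqrt n)
      ≤ (Matrix.trace B).re :=
  shadow_bound_tensor_power_general ρ hρ n δ η hδ B hB
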